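/- Proposition 1 (prefix indistinguishability): consider the family of prefix-commitment MDPs indexed by β ∈ {true, false}, where in instance β the terminal reward 1 is earned by initial action L if β = true and by initial action R if β = false, with the chain states, transitions, and all other rewards unchanged. The collection of observable length-H windows (those with start time t ≥ 1 and t + H ≤ H+1) is the same in both instances and under both initial actions. Therefore, for every decision rule D mapping collections of length-H windows to an action in {L, R}, there exists β ∈ {true, false} such that in instance β the action selected by D achieves full-horizon return 0 while the other action achieves return 1; i.e., no decision rule depending only on length-H windows is guaranteed to select the optimal initial action. -/

import Mathlib

/-!
Proposition 1 (prefix indistinguishability): a family of prefix-commitment MDPs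
indexed by `β : Bool`, where the terminal reward `1` is earned by initial action
`L` if `β = true` and by `R` if `β = false`.  Actions are encoded by `Bool`
(`true ↦ L`, `false ↦ R`).
-/

/-- States: `Sum.inl t` is the chain state `s_t`, `Sum.inr true` is `g`,
`Sum.inr false` is `b`. -/
abbrev PCState : Type := ℕ ⊕ Bool

/-- Trajectory induced by an initial action `a : Bool` (`true ↦ L`): the shared
chain `s_0, …, s_{H+1}` followed by `g` under `L` and by `b` under `R`.  The
trajectories do not depend on the instance `β`. -/
def traj (H : ℕ) (a : Bool) (t : ℕ) : PCState :=
  if t ≤ H + 1 then Sum.inl t else Sum.inr a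

/-- Reward at step `t` in instance `β` under initial action `a`: the final
transition (step `H+1`) carries reward `1` exactly when it enters the rewarded
terminal, i.e. when `a = β`; all other rewards are `0`. -/
def rew (H : ℕ) (β a : Bool) (t : ℕ) : ℝ :=
  if t = H + 1 ∧ a = β then 1 else 0

/-- Full-horizon return in instance `β` under initial action `a`. -/
def ret (H : ℕ) (β a : Bool) : ℝ := ∑ t ∈ Finset.range (H + 2), rew H β a t

/-- The collection of observable length-`H` windows of a trajectory: the window
starting at time `t` (observable iff `1 ≤ t` and `t + H ≤ H+1`) with entries
indexed by `i ≤ H`. -/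
def obsWindows (H : ℕ) (τ : ℕ → PCState) : ℕ → ℕ → Option PCState :=
  fun t i => if 1 ≤ t ∧ t + H ≤ H + 1 ∧ i ≤ H then some (τ (t + i)) else none

theorem obsWindows_congr (H : ℕ) {τ τ' : ℕ → PCState}
    (h : ∀ t, 1 ≤ t → t ≤ H + 1 → τ t = τ' t) : obsWindows H τ = obsWindows H τ' := by
  funext t i
  unfold obsWindows
  split_ifs with hw
  · rw [h (t + i) (by omega) (by omega)]
  · rfl

theorem traj_of_le_succ (H : ℕ) (a : Bool) {t : ℕ} (ht : t ≤ H + 1) :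
    traj H a t = Sum.inl t :=
  if_pos ht

theorem obsWindows_traj_eq (H : ℕ) (a a' : Bool) :
    obsWindows H (traj H a) = obsWindows H (traj H a') :=
  obsWindows_congr H fun _ _ ht => by rw [traj_of_le_succ H a ht, traj_of_le_succ H a' ht]

theorem ret_eq_ite (H : ℕ) (β a : Bool) : ret H β a = if a = β then 1 else 0 := by
  unfold ret rew
  split_ifs with h
  · rw [Finset.sum_eq_single_of_mem (H + 1) (by simp) fun t _ ht => if_neg fun h' => ht h'.1]
    exact if_pos ⟨rfl, h⟩
  · exact Finset.sum_eq_zero fun t _ => if_neg fun h' => h h'.2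

theorem ret_self (H : ℕ) (a : Bool) : ret H a a = 1 := by
  rw [ret_eq_ite, if_pos rfl]

theorem ret_not_self (H : ℕ) (a : Bool) : ret H (!a) a = 0 := by
  rw [ret_eq_ite, if_neg (Bool.eq_not_self a).mp]

theorem prefix_indistinguishability_general (H : ℕ) :
    (∀ a a' : Bool, obsWindows H (traj H a) = obsWindows H (traj H a')) ∧
    (∀ D : (ℕ → ℕ → Option PCState) → Bool, ∃ β : Bool,
      ret H β (D (obsWindows H (traj H true))) = 0 ∧
      ret H β (!(D (obsWindows H (traj H true)))) = 1) := by
  refine ⟨obsWindows_traj_eq H, fun D => ?_⟩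
  set d := D (obsWindows H (traj H true))
  exact ⟨!d, ret_not_self H d, ret_self H (!d)⟩

/-- **Proposition 1.** The collection of observable length-`H`
windows is the same in both instances and under both initial actions.  Hence for
every decision rule `D` mapping collections of length-`H` windows to an action,
there exists an instance `β` in which the action selected by `D` achieves
full-horizon return `0` while the other action achieves return `1`: no decision
rule depending only on length-`H` windows is guaranteed to select the optimal
initial action. -/
theorem prefix_indistinguishability (H : ℕ) (hH : 1 ≤ H) :
    (∀ a a' : Bool, obsWindows H (traj H a) = obsWindows H (traj H a')) ∧
    (∀ D : (ℕ → ℕ → Option PCState) → Bool, ∃ β : Bool,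
      ret H β (D (obsWindows H (traj H true))) = 0 ∧
      ret H β (!(D (obsWindows H (traj H true)))) = 1) :=
  prefix_indistinguishability_general H
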